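/- If a homeomorphism f of a compact metric space has both the limit shadowing property and the negative limit shadowing property, the shadowing property, the specification property, and is expansive, then any two-sided limit pseudo-orbit (x_i)_{i∈ℤ} is two-sided limit shadowed by a single point y obtained by connecting, via specification and shadowing, a negative-limit shadow p_1 of (x_i)_{i≤0} and a positive-limit shadow p_2 of (x_i)_{i≥0}. -/

import Mathlib

open Filter Topology

/-- The `n`-th iterate (for `n : ℤ`) of a homeomorphism. -/
def iterZ {X : Type*} [MetricSpace X] (f : X ≃ₜ X) (n : ℤ) (x : X) : X :=
  (f.toEquiv ^ n) x

/-- `f` has the two-sided limit shadowing property: every sequence `(x_i)_{i∈ℤ}` with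
`d(f(x_i), x_{i+1}) → 0` as `|i| → ∞` admits `y` with `d(f^i(y), x_i) → 0` as `|i| → ∞`. -/
def TwoSidedLimitShadowing {X : Type*} [MetricSpace X] (f : X ≃ₜ X) : Prop :=
  ∀ x : ℤ → X,
    Tendsto (fun i => dist (f (x i)) (x (i + 1))) cofinite (𝓝 0) →
    ∃ y : X, Tendsto (fun i => dist (iterZ f i y) (x i)) cofinite (𝓝 0)

/-- The (pseudo-orbit) shadowing property. -/
def ShadowingProp {X : Type*} [MetricSpace X] (f : X ≃ₜ X) : Prop :=
  ∀ ε > 0, ∃ δ > 0, ∀ x : ℤ → X,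
    (∀ i, dist (f (x i)) (x (i + 1)) < δ) →
    ∃ y, ∀ i, dist (iterZ f i y) (x i) < ε

/-- Expansiveness of a homeomorphism. -/
def ExpansiveH {X : Type*} [MetricSpace X] (f : X ≃ₜ X) : Prop :=
  ∃ ε > 0, ∀ x y : X, (∀ i : ℤ, dist (iterZ f i x) (iterZ f i y) < ε) → x = y

/-- The specification property: for every `ε > 0` there is `L` such that every `L`-spaced
specification (finite family of orbit pieces on integer intervals `[a i, b i]` whose
consecutive intervals are at least `L` apart) is `ε`-shadowed. -/
def SpecificationProp {X : Type*} [MetricSpace X] (f : X ≃ₜ X) : Prop :=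
  ∀ ε > 0, ∃ L : ℕ, ∀ (m : ℕ) (a b : Fin m → ℤ) (P : ℤ → X),
    (∀ i, a i ≤ b i) →
    (∀ (i : ℕ) (h : i + 1 < m), b ⟨i, Nat.lt_of_succ_lt h⟩ + L ≤ a ⟨i + 1, h⟩) →
    (∀ (i : Fin m), ∀ t₁ ∈ Set.Icc (a i) (b i), ∀ t₂ ∈ Set.Icc (a i) (b i),
      iterZ f (t₂ - t₁) (P t₁) = P t₂) →
    ∃ y, ∀ (i : Fin m), ∀ n ∈ Set.Icc (a i) (b i), dist (iterZ f n y) (P n) < ε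

/-- The (positive) limit shadowing property. -/
def LimitShadowing {X : Type*} [MetricSpace X] (f : X ≃ₜ X) : Prop :=
  ∀ x : ℕ → X, Tendsto (fun n => dist (f (x n)) (x (n + 1))) atTop (𝓝 0) →
    ∃ y, Tendsto (fun n : ℕ => dist (iterZ f n y) (x n)) atTop (𝓝 0)

/-- The negative limit shadowing property. -/
def NegLimitShadowing {X : Type*} [MetricSpace X] (f : X ≃ₜ X) : Prop :=
  ∀ x : ℤ → X, Tendsto (fun n => dist (f (x n)) (x (n + 1))) atBot (𝓝 0) →
    ∃ y, Tendsto (fun n : ℤ => dist (iterZ f n y) (x n)) atBot (𝓝 0)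


section Helpers

variable {X : Type*} [MetricSpace X]

lemma iterZ_add (f : X ≃ₜ X) (m n : ℤ) (x : X) :
    iterZ f (m + n) x = iterZ f m (iterZ f n x) := by
  simp [iterZ, zpow_add, Equiv.Perm.mul_apply]

lemma iterZ_one (f : X ≃ₜ X) (x : X) : iterZ f 1 x = f x := by
  simp [iterZ]

lemma iterZ_neg_one (f : X ≃ₜ X) (x : X) : iterZ f (-1) x = f.symm x := by
  simp [iterZ, zpow_neg, Equiv.Perm.inv_def]

lemma iterZ_continuous (f : X ≃ₜ X) (n : ℤ) : Continuous (iterZ f n) := by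
  induction n using Int.induction_on with
  | zero => rw [show iterZ f 0 = id from funext fun x => by simp [iterZ]]; exact continuous_id
  | succ k ih =>
      have : iterZ f (k + 1) = fun x => iterZ f 1 (iterZ f k x) := by
        funext x; rw [← iterZ_add, add_comm]
      rw [this]
      simp only [iterZ_one]
      exact f.continuous.comp ih
  | pred k ih =>
      have : iterZ f (-k - 1) = fun x => iterZ f (-1) (iterZ f (-k) x) := by
        funext x; rw [← iterZ_add]; ring_nf
      rw [this]
      simp only [iterZ_neg_one]
      exact f.symm.continuous.comp ih

lemma iterZ_symm (f : X ≃ₜ X) (n : ℤ) (x : X) : iterZ f.symm n x = iterZ f (-n) x := by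
  simp [iterZ, zpow_neg, ← inv_zpow, Equiv.Perm.inv_def]
  rfl

lemma key_top [CompactSpace X] (f : X ≃ₜ X) (c : ℝ) (hc : 0 < c)
    (hexp : ∀ x y : X, (∀ i : ℤ, dist (iterZ f i x) (iterZ f i y) < c) → x = y)
    (x y : X) (N : ℤ) (h : ∀ n : ℤ, N ≤ n → dist (iterZ f n x) (iterZ f n y) ≤ c / 2) :
    Tendsto (fun n : ℤ => dist (iterZ f n x) (iterZ f n y)) atTop (𝓝 0) := by
  by_contra hcon
  rw [Metric.tendsto_nhds] at hcon
  push_neg at hcon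
  obtain ⟨ε, hε, hfreq⟩ := hcon
  have hsel : ∀ k : ℕ, ∃ n : ℤ, (k : ℤ) ≤ n ∧
      ε ≤ dist (iterZ f n x) (iterZ f n y) := by
    intro k
    obtain ⟨n, hn1, hn2⟩ := Filter.frequently_atTop.mp hfreq (k : ℤ)
    refine ⟨n, hn1, ?_⟩
    rw [Real.dist_eq, sub_zero, abs_of_nonneg dist_nonneg] at hn2
    exact hn2
  choose φ hφ1 hφ2 using hsel
  set g : ℕ → X × X := fun k => (iterZ f (φ k) x, iterZ f (φ k) y) with hg
  obtain ⟨z, -, ψ, hψ, hlim⟩ := IsCompact.tendsto_subseq (x := g) isCompact_univ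
    (fun k => Set.mem_univ _)
  have hlim1 : Tendsto (fun k => iterZ f (φ (ψ k)) x) atTop (𝓝 z.1) :=
    (continuous_fst.tendsto z).comp hlim
  have hlim2 : Tendsto (fun k => iterZ f (φ (ψ k)) y) atTop (𝓝 z.2) :=
    (continuous_snd.tendsto z).comp hlim
  have hne : ε ≤ dist z.1 z.2 := by
    exact ge_of_tendsto' (hlim1.dist hlim2) (fun k => hφ2 (ψ k))
  have hbig : ∀ m : ℤ, dist (iterZ f m z.1) (iterZ f m z.2) ≤ c / 2 := by
    intro m
    have h1 : Tendsto (fun k => iterZ f m (iterZ f (φ (ψ k)) x)) atTop (𝓝 (iterZ f m z.1)) :=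
      ((iterZ_continuous f m).tendsto z.1).comp hlim1
    have h2 : Tendsto (fun k => iterZ f m (iterZ f (φ (ψ k)) y)) atTop (𝓝 (iterZ f m z.2)) :=
      ((iterZ_continuous f m).tendsto z.2).comp hlim2
    refine le_of_tendsto (h1.dist h2) ?_
    filter_upwards [eventually_ge_atTop (N - m).toNat] with k hk
    rw [← iterZ_add, ← iterZ_add]
    apply h
    have h3 : (k : ℤ) ≤ φ (ψ k) := le_trans (by exact_mod_cast hψ.le_apply) (hφ1 (ψ k))
    have h4 : ((N - m).toNat : ℤ) ≤ (k : ℤ) := by exact_mod_cast hk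
    have := Int.self_le_toNat (N - m)
    omega
  have : z.1 = z.2 := hexp z.1 z.2 (fun i => lt_of_le_of_lt (hbig i) (by linarith))
  rw [this, dist_self] at hne
  linarith

end Helpers

/-- Connecting lemma: for an expansive homeomorphism with limit shadowing, negative limit
shadowing, shadowing and specification, any two-sided limit pseudo-orbit, together with a
negative-limit shadow `p₁` and a positive-limit shadow `p₂`, is two-sided limit shadowed by
a single point `y` asymptotic to the orbit of `p₁` in the past and of `p₂` in the future. -/
theorem stmt15 {X : Type*} [MetricSpace X] [CompactSpace X] (f : X ≃ₜ X)
    (hls : LimitShadowing f) (hnls : NegLimitShadowing f) (hsh : ShadowingProp f)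
    (hspec : SpecificationProp f) (hexp : ExpansiveH f)
    (x : ℤ → X) (hx : Tendsto (fun i => dist (f (x i)) (x (i + 1))) cofinite (𝓝 0))
    (p₁ p₂ : X)
    (hp₁ : Tendsto (fun n : ℤ => dist (iterZ f n p₁) (x n)) atBot (𝓝 0))
    (hp₂ : Tendsto (fun n : ℤ => dist (iterZ f n p₂) (x n)) atTop (𝓝 0)) :
    ∃ y : X,
      Tendsto (fun n : ℤ => dist (iterZ f n y) (iterZ f n p₁)) atBot (𝓝 0) ∧
      Tendsto (fun n : ℤ => dist (iterZ f n y) (iterZ f n p₂)) atTop (𝓝 0) ∧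
      Tendsto (fun n : ℤ => dist (iterZ f n y) (x n)) cofinite (𝓝 0) := by
  obtain ⟨c, hc, hexpc⟩ := hexp
  obtain ⟨L0, hL⟩ := hspec (c / 2) (by linarith)
  set L : ℤ := max (L0 : ℤ) 1 with hLdef
  have hL1 : (1 : ℤ) ≤ L := le_max_right _ _
  -- for each m, a connecting point shadowing orbit of p₁ on [-m,0] and of p₂ on [L, L+m]
  have hsel : ∀ m : ℕ, ∃ y : X,
      (∀ n : ℤ, -(m : ℤ) ≤ n → n ≤ 0 → dist (iterZ f n y) (iterZ f n p₁) < c / 2) ∧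
      (∀ n : ℤ, L ≤ n → n ≤ L + m → dist (iterZ f n y) (iterZ f n p₂) < c / 2) := by
    intro m
    set P : ℤ → X := fun t => if t ≤ 0 then iterZ f t p₁ else iterZ f t p₂ with hP
    obtain ⟨y, hy⟩ := hL 2 ![-(m : ℤ), L] ![0, L + m] P
      (by
        intro i
        fin_cases i <;> simp <;> omega)
      (by
        intro i hi
        have hi0 : i = 0 := by omega
        subst hi0
        show (0 : ℤ) + (L0 : ℤ) ≤ L
        have : (L0 : ℤ) ≤ L := le_max_left _ _
        omega)
      (by
        intro i t₁ ht₁ t₂ ht₂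
        fin_cases i <;> simp only [Fin.zero_eta, Fin.mk_one, Fin.isValue,
          Matrix.cons_val_zero, Matrix.cons_val_one, Matrix.head_cons, Set.mem_Icc] at ht₁ ht₂
        · show iterZ f (t₂ - t₁) (P t₁) = P t₂
          rw [hP]
          simp only [if_pos ht₁.2, if_pos ht₂.2]
          rw [← iterZ_add, sub_add_cancel]
        · have h1 : ¬ t₁ ≤ 0 := by omega
          have h2 : ¬ t₂ ≤ 0 := by omega
          show iterZ f (t₂ - t₁) (P t₁) = P t₂
          rw [hP]
          simp only [if_neg h1, if_neg h2]
          rw [← iterZ_add, sub_add_cancel])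
    refine ⟨y, ?_, ?_⟩
    · intro n hn1 hn2
      have := hy 0 n (by simp [Set.mem_Icc]; omega)
      simpa [hP, if_pos hn2] using this
    · intro n hn1 hn2
      have := hy 1 n (by simp [Set.mem_Icc]; omega)
      have hn0 : ¬ n ≤ 0 := by omega
      simpa [hP, if_neg hn0] using this
  choose y hy1 hy2 using hsel
  obtain ⟨w, -, ψ, hψ, hwl⟩ := IsCompact.tendsto_subseq (x := y) isCompact_univ
    (fun k => Set.mem_univ _)
  -- limit bounds
  have h1 : ∀ n : ℤ, n ≤ 0 → dist (iterZ f n w) (iterZ f n p₁) ≤ c / 2 := by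
    intro n hn
    have hlim : Tendsto (fun k => dist (iterZ f n (y (ψ k))) (iterZ f n p₁)) atTop
        (𝓝 (dist (iterZ f n w) (iterZ f n p₁))) :=
      ((((iterZ_continuous f n).tendsto w).comp hwl).dist tendsto_const_nhds)
    refine le_of_tendsto hlim ?_
    filter_upwards [eventually_ge_atTop (-n).toNat] with k hk
    have h3 : (k : ℤ) ≤ ψ k := by exact_mod_cast hψ.le_apply
    have h4 : ((-n).toNat : ℤ) ≤ (k : ℤ) := by exact_mod_cast hk
    have h5 := Int.self_le_toNat (-n)
    exact (hy1 (ψ k) n (by omega) hn).le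
  have h2 : ∀ n : ℤ, L ≤ n → dist (iterZ f n w) (iterZ f n p₂) ≤ c / 2 := by
    intro n hn
    have hlim : Tendsto (fun k => dist (iterZ f n (y (ψ k))) (iterZ f n p₂)) atTop
        (𝓝 (dist (iterZ f n w) (iterZ f n p₂))) :=
      ((((iterZ_continuous f n).tendsto w).comp hwl).dist tendsto_const_nhds)
    refine le_of_tendsto hlim ?_
    filter_upwards [eventually_ge_atTop (n - L).toNat] with k hk
    have h3 : (k : ℤ) ≤ ψ k := by exact_mod_cast hψ.le_apply
    have h4 : ((n - L).toNat : ℤ) ≤ (k : ℤ) := by exact_mod_cast hk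
    have h5 := Int.self_le_toNat (n - L)
    exact (hy2 (ψ k) n hn (by omega)).le
  -- forward convergence
  have htop : Tendsto (fun n : ℤ => dist (iterZ f n w) (iterZ f n p₂)) atTop (𝓝 0) :=
    key_top f c hc hexpc w p₂ L h2
  -- backward convergence via f.symm
  have hexps : ∀ x y : X, (∀ i : ℤ, dist (iterZ f.symm i x) (iterZ f.symm i y) < c) → x = y := by
    intro a b hab
    refine hexpc a b fun i => ?_
    have := hab (-i)
    rwa [iterZ_symm, iterZ_symm, neg_neg] at this
  have hbot' : Tendsto (fun n : ℤ => dist (iterZ f.symm n w) (iterZ f.symm n p₁)) atTop (𝓝 0) := by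
    refine key_top f.symm c hc hexps w p₁ 0 fun n hn => ?_
    rw [iterZ_symm, iterZ_symm]
    exact h1 (-n) (by omega)
  have hbot : Tendsto (fun n : ℤ => dist (iterZ f n w) (iterZ f n p₁)) atBot (𝓝 0) := by
    have := hbot'.comp tendsto_neg_atBot_atTop
    simpa [Function.comp_def, iterZ_symm] using this
  refine ⟨w, hbot, htop, ?_⟩
  rw [Int.cofinite_eq, tendsto_sup]
  constructor
  · refine squeeze_zero (fun n => dist_nonneg)
      (fun n => dist_triangle (iterZ f n w) (iterZ f n p₁) (x n)) ?_
    simpa using hbot.add hp₁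
  · refine squeeze_zero (fun n => dist_nonneg)
      (fun n => dist_triangle (iterZ f n w) (iterZ f n p₂) (x n)) ?_
    simpa using htop.add hp₂
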